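/- arXiv:gr-qc/0511107 — 4 statements merged into one kernel-verified Lean document; each statement's English description precedes it below -/
import Mathlib

section
/- Let h be a complex Hilbert space, h_inv a closed subspace, and h_⊥ its orthogonal complement. Let ψ be an element of the n-fold symmetric tensor power of h. If the contraction of ψ against ξ in the first tensor slot (i.e., the map φ ↦ ⟨ξ ⊗ η, ψ⟩ for all η) vanishes for every ξ ∈ h_⊥, then ψ lies in the n-fold symmetric tensor power of h_inv. -/
open scoped ComplexInnerProductSpace BigOperators

/-!
Split each `v i` as `a i + b i` with `a i ∈ h_inv` and `b i ∈ h_invᗮ`. Expanding `T v`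
multilinearly, `T a` lies in the tensor power `S` of `h_inv`, and every other term has a slot in
`h_invᗮ`. Such a term is orthogonal to `S`, since a factor of its inner products vanishes, and to
`ψ`, since a permutation moves that slot to the front where the contraction vanishes. So `S` and
these terms span a dense subspace to which the component of `ψ` orthogonal to `S` is orthogonal.
-/

namespace Submodule

open scoped InnerProductSpace

variable {𝕜 E : Type*} [RCLike 𝕜] [NormedAddCommGroup E] [InnerProductSpace 𝕜 E]

theorem mem_orthogonal_span_of_forall_inner_eq_zero {s : Set E} {x : E}
    (h : ∀ u ∈ s, ⟪u, x⟫_𝕜 = 0) : x ∈ (span 𝕜 s)ᗮ :=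
  (isOrtho_span.2 fun u hu _ hv => Set.mem_singleton_iff.1 hv ▸ h u hu).symm
    (mem_span_singleton_self x)

theorem eq_zero_of_forall_inner_eq_zero_of_dense_span {s : Set E}
    (hs : Dense (span 𝕜 s : Set E)) {x : E} (h : ∀ u ∈ s, ⟪u, x⟫_𝕜 = 0) : x = 0 := by
  have hx := mem_orthogonal_span_of_forall_inner_eq_zero h
  rwa [← orthogonal_closure, dense_iff_topologicalClosure_eq_top.1 hs, top_orthogonal_eq_bot,
    mem_bot] at hx

theorem mem_of_isOrtho_of_topologicalClosure_sup_eq_top [CompleteSpace E] {S A : Submodule 𝕜 E}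
    (hS : IsClosed (S : Set E)) (hSA : S ⟂ A) (hdense : (S ⊔ A).topologicalClosure = ⊤)
    {x : E} (hx : x ∈ Aᗮ) : x ∈ S := by
  have : CompleteSpace S := hS.completeSpace_coe
  obtain ⟨p, hp, q, hqS, rfl⟩ := S.exists_add_mem_mem_orthogonal x
  have hqA : q ∈ Aᗮ := by simpa using Aᗮ.sub_mem hx (hSA hp)
  have hq : q ∈ (S ⊔ A)ᗮ := inf_orthogonal S A ▸ ⟨hqS, hqA⟩
  rw [topologicalClosure_eq_top_iff.1 hdense, mem_bot] at hq
  simpa [hq] using hp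

end Submodule

theorem MultilinearMap.map_add_sub_map_mem_span {R ι M₂ : Type*} {M₁ : ι → Type*} [Semiring R]
    [Fintype ι] [∀ i, AddCommMonoid (M₁ i)] [∀ i, Module R (M₁ i)] [AddCommGroup M₂]
    [Module R M₂] (f : MultilinearMap R M₁ M₂) (a b : ∀ i, M₁ i) :
    f (a + b) - f a ∈ Submodule.span R (f '' {u | ∃ j, u j = b j}) := by
  classical
  rw [f.map_add_univ, ← Finset.add_sum_erase _ _ (Finset.mem_univ Finset.univ),
    Finset.piecewise_univ, add_sub_cancel_left]
  refine Submodule.sum_mem _ fun s hs => Submodule.subset_span ⟨_, ?_, rfl⟩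
  obtain ⟨j, hj⟩ : ∃ j, j ∉ s := by
    simpa [Finset.eq_univ_iff_forall] using Finset.ne_of_mem_erase hs
  exact ⟨j, s.piecewise_eq_of_notMem _ _ hj⟩

section HilbertSpace

open scoped InnerProductSpace

variable {𝕜 h E : Type*} [RCLike 𝕜]
  [NormedAddCommGroup h] [InnerProductSpace 𝕜 h] [NormedAddCommGroup E] [InnerProductSpace 𝕜 E]

theorem MultilinearMap.map_sub_map_starProjection_mem_span {ι : Type*} [Fintype ι]
    (f : MultilinearMap 𝕜 (fun _ : ι => h) E) (K : Submodule 𝕜 h) [K.HasOrthogonalProjection]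
    (v : ι → h) :
    f v - f (fun i => K.starProjection (v i)) ∈ Submodule.span 𝕜 (f '' {u | ∃ j, u j ∈ Kᗮ}) := by
  have hexp := f.map_add_sub_map_mem_span (fun i => K.starProjection (v i))
    (v - fun i => K.starProjection (v i))
  rw [add_sub_cancel] at hexp
  refine Submodule.span_mono ?_ hexp
  rintro _ ⟨u, ⟨j, hj⟩, rfl⟩
  exact ⟨u, ⟨j, hj ▸ K.sub_starProjection_mem_orthogonal (v j)⟩, rfl⟩

section TensorMap

variable {ι : Type*} [Fintype ι] {T : (ι → h) → E}

theorem inner_apply_update_right [DecidableEq ι]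
    (hT : ∀ v w, ⟪T v, T w⟫_𝕜 = ∏ i, ⟪v i, w i⟫_𝕜) (w v : ι → h) (j : ι) (y : h) :
    ⟪T w, T (Function.update v j y)⟫_𝕜 = ⟪w j, y⟫_𝕜 * ∏ i ∈ Finset.univ.erase j, ⟪w i, v i⟫_𝕜 := by
  rw [hT, ← Finset.mul_prod_erase _ _ (Finset.mem_univ j), Function.update_self]
  congr 1
  exact Finset.prod_congr rfl fun i hi => by rw [Function.update_of_ne (Finset.ne_of_mem_erase hi)]

def MultilinearMap.ofInnerEqProd (hT : ∀ v w, ⟪T v, T w⟫_𝕜 = ∏ i, ⟪v i, w i⟫_𝕜)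
    (hdense : Dense (Submodule.span 𝕜 (Set.range T) : Set E)) :
    MultilinearMap 𝕜 (fun _ : ι => h) E where
  toFun := T
  map_update_add' := by
    intro _ v j x y
    refine sub_eq_zero.1 <| Submodule.eq_zero_of_forall_inner_eq_zero_of_dense_span hdense ?_
    rintro _ ⟨w, rfl⟩
    simp only [inner_sub_right, inner_add_right, inner_apply_update_right hT]
    ring
  map_update_smul' := by
    intro _ v j c x
    refine sub_eq_zero.1 <| Submodule.eq_zero_of_forall_inner_eq_zero_of_dense_span hdense ?_
    rintro _ ⟨w, rfl⟩
    simp only [inner_sub_right, inner_smul_right, inner_apply_update_right hT]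
    ring

theorem inner_eq_zero_of_apply_mem_orthogonal (hT : ∀ v w, ⟪T v, T w⟫_𝕜 = ∏ i, ⟪v i, w i⟫_𝕜)
    {K : Submodule 𝕜 h} {w u : ι → h} (hw : ∀ i, w i ∈ K) {j : ι} (hu : u j ∈ Kᗮ) :
    ⟪T w, T u⟫_𝕜 = 0 := by
  rw [hT]
  exact Finset.prod_eq_zero (Finset.mem_univ j) (Submodule.inner_right_of_mem_orthogonal (hw j) hu)

end TensorMap

theorem inner_eq_zero_of_perm_invariant_of_contraction_eq_zero {n : ℕ}
    {T : (Fin (n + 1) → h) → E} {K : Submodule 𝕜 h} {ψ : E}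
    (hsymm : ∀ (σ : Equiv.Perm (Fin (n + 1))) (v : Fin (n + 1) → h),
      ⟪T (v ∘ σ), ψ⟫_𝕜 = ⟪T v, ψ⟫_𝕜)
    (hcontr : ∀ ξ ∈ Kᗮ, ∀ w : Fin n → h, ⟪T (Fin.cons ξ w), ψ⟫_𝕜 = 0)
    {u : Fin (n + 1) → h} {j : Fin (n + 1)} (hu : u j ∈ Kᗮ) : ⟪T u, ψ⟫_𝕜 = 0 := by
  rw [← hsymm (Equiv.swap 0 j) u, ← Fin.cons_self_tail (u ∘ Equiv.swap 0 j)]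
  exact hcontr _ (by simpa using hu) _

end HilbertSpace

-- `T` plays the role of the elementary tensors `v ↦ v 0 ⊗ ⋯ ⊗ v n`, and the symmetry of `ψ` is
-- only tested against them.
/-- If `ψ` is in the `(n+1)`-fold symmetric tensor power of a Hilbert space `h`
(realized inside a Hilbert space `E` via a tensor map `T` with
`⟨T v, T w⟩ = ∏ i ⟨v i, w i⟩` and dense span, symmetry being expressed weakly
against elementary tensors), and its contraction in the first slot against every
`ξ` in the orthogonal complement of a closed subspace `h_inv` vanishes, then `ψ`
lies in the (symmetric) tensor power of `h_inv`, i.e. in the closed span of the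
elementary tensors with all entries from `h_inv`. -/
theorem statement1 {h E : Type*}
    [NormedAddCommGroup h] [InnerProductSpace ℂ h] [CompleteSpace h]
    [NormedAddCommGroup E] [InnerProductSpace ℂ E] [CompleteSpace E]
    (n : ℕ) (T : (Fin (n + 1) → h) → E)
    (hT_inner : ∀ v w : Fin (n + 1) → h, ⟪T v, T w⟫ = ∏ i, ⟪v i, w i⟫)
    (hT_dense : Dense ((Submodule.span ℂ (Set.range T) : Submodule ℂ E) : Set E))
    (hinv : Submodule ℂ h) (hcl : IsClosed (hinv : Set h))
    (ψ : E)
    (hsymm : ∀ (σ : Equiv.Perm (Fin (n + 1))) (v : Fin (n + 1) → h),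
      ⟪T (v ∘ σ), ψ⟫ = ⟪T v, ψ⟫)
    (hcontr : ∀ ξ ∈ hinvᗮ, ∀ w : Fin n → h, ⟪T (Fin.cons ξ w), ψ⟫ = 0) :
    ψ ∈ (Submodule.span ℂ (T '' {v | ∀ i, v i ∈ hinv})).topologicalClosure := by
  open Submodule in
  set S := (span ℂ (T '' {v | ∀ i, v i ∈ hinv})).topologicalClosure
  set A := span ℂ (T '' {u | ∃ j, u j ∈ hinvᗮ})
  have hSA : S ⟂ A := by
    refine topologicalClosure_minimal _ (isOrtho_span.2 ?_) A.isClosed_orthogonal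
    rintro _ ⟨w, hw, rfl⟩ _ ⟨u, ⟨j, hj⟩, rfl⟩
    exact inner_eq_zero_of_apply_mem_orthogonal hT_inner hw hj
  have hψA : ψ ∈ Aᗮ := mem_orthogonal_span_of_forall_inner_eq_zero <| by
    rintro _ ⟨u, ⟨j, hj⟩, rfl⟩
    exact inner_eq_zero_of_perm_invariant_of_contraction_eq_zero hsymm hcontr hj
  have hrange : Set.range T ⊆ (S ⊔ A : Submodule ℂ E) := by
    rintro _ ⟨v, rfl⟩
    have : CompleteSpace hinv := hcl.completeSpace_coe
    have hproj : T (fun i => hinv.starProjection (v i)) ∈ S :=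
      le_topologicalClosure _ (subset_span ⟨_, fun i => hinv.starProjection_apply_mem (v i), rfl⟩)
    have hrest : T v - T (fun i => hinv.starProjection (v i)) ∈ A :=
      (MultilinearMap.ofInnerEqProd hT_inner hT_dense).map_sub_map_starProjection_mem_span hinv v
    exact mem_sup.2 ⟨_, hproj, _, hrest, add_sub_cancel _ _⟩
  refine mem_of_isOrtho_of_topologicalClosure_sup_eq_top (isClosed_topologicalClosure _) hSA ?_ hψA
  exact eq_top_mono (topologicalClosure_mono (span_le.2 hrange))
    (dense_iff_topologicalClosure_eq_top.1 hT_dense)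
end

section
/- Let H = H_red ⊗ H_⊥ and Ĥ = Ĥ_red ⊗ 1 + 1 ⊗ Ĥ_⊥ on appropriate domains. If δ is a linear functional on a dense domain of H_⊥ that is not an eigenvector of the dual operator Ĥ_⊥*, then for every nonzero Ψ in the domain of Ĥ_red*, the dual vector Ĥ*(Ψ* ⊗ δ) is not of the form Φ* ⊗ δ for any Φ; i.e., the dual Hamiltonian maps every nonzero element of H_red* ⊗ δ out of H_red* ⊗ δ. -/
/-! Evaluating `Ĥ*(Ψ* ⊗ δ) = Φ* ⊗ δ` at `u ⊗ w` with `Ψ*(u) ≠ 0` and solving for `δ(Ĥ_⊥ w)` shows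
`δ ∘ Ĥ_⊥ = c δ` with `c = (Φ*(u) - Ψ*(Ĥ_red u)) / Ψ*(u)`, i.e. `δ` is an eigenvector of `Ĥ_⊥*`. -/

theorem exists_eigenvalue_of_dual_sum_eq_tensor {K M N : Type*} [Field K]
    (A : M → M) (B : N → N) (ψ φ : M → K) (δ : N → K) {u : M} (hu : ψ u ≠ 0)
    (h : ∀ w, ψ (A u) * δ w + ψ u * δ (B w) = φ u * δ w) :
    ∃ c : K, ∀ w, δ (B w) = c * δ w := by
  refine ⟨(φ u - ψ (A u)) / ψ u, fun w => ?_⟩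
  field_simp
  linear_combination h w

/-- If `Ĥ = Ĥ_red ⊗ 1 + 1 ⊗ Ĥ_⊥` (acting on the algebraic tensor product of the
dense domains `D_red`, `D_⊥`), and the linear functional `δ` on `D_⊥` is not an
eigenvector of the dual operator `Ĥ_⊥*`, then for every nonzero functional `Ψ*`
on `D_red`, the dual vector `Ĥ*(Ψ* ⊗ δ)`, i.e. the functional
`u ⊗ w ↦ Ψ*(Ĥ_red u) δ(w) + Ψ*(u) δ(Ĥ_⊥ w)`, is not of the form `Φ* ⊗ δ`
for any functional `Φ*`: the dual Hamiltonian maps every nonzero element of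
`H_red* ⊗ δ` out of `H_red* ⊗ δ`. -/
theorem statement9 {Dred Dperp : Type*}
    [AddCommGroup Dred] [Module ℂ Dred] [AddCommGroup Dperp] [Module ℂ Dperp]
    (Hred_op : Dred →ₗ[ℂ] Dred) (Hperp_op : Dperp →ₗ[ℂ] Dperp)
    (δ : Dperp →ₗ[ℂ] ℂ)
    (hδ : ¬ ∃ c : ℂ, ∀ w : Dperp, δ (Hperp_op w) = c * δ w)
    (Ψs : Dred →ₗ[ℂ] ℂ) (hΨs : Ψs ≠ 0) :
    ¬ ∃ Φs : Dred →ₗ[ℂ] ℂ, ∀ (u : Dred) (w : Dperp),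
      Ψs (Hred_op u) * δ w + Ψs u * δ (Hperp_op w) = Φs u * δ w := by
  rintro ⟨Φs, h⟩
  obtain ⟨u, hu⟩ := DFunLike.ne_iff.mp hΨs
  exact hδ (exists_eigenvalue_of_dual_sum_eq_tensor Hred_op Hperp_op Ψs Φs δ hu (h u))
end

section
/- With ι : H_red → H an isometric embedding, P the orthogonal projection onto ι[H_red], O a bounded self-adjoint operator on H, and O_red := ι⁻¹ ∘ P ∘ O ∘ ι: for every unit vector Ψ ∈ H_red, the fluctuations satisfy Δ_{ιΨ}(O) ≥ Δ_Ψ(O_red), with equality for all Ψ if and only if O preserves ι[H_red]. -/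
open scoped ComplexInnerProductSpace

/-!
Write `O_red = ι† O ι` and `Δ_Φ(A)² = ‖AΦ‖² − ⟨Φ, AΦ⟩²` for self-adjoint `A`. The first moments
of `O` at `ιΨ` and of `O_red` at `Ψ` agree, so only the second moments `‖O ιΨ‖²` and
`‖ι† O ιΨ‖²` have to be compared; for unit `Ψ` both radicands are nonnegative by Cauchy–Schwarz,
so the square roots are equal exactly when the second moments are. Since `ι ι†` is the orthogonal
projection onto the range of `ι`, `‖y‖² − ‖ι† y‖² = ‖y − ι ι† y‖²`, which is nonnegative and
vanishes exactly when `y` lies in that range.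
-/

open RCLike ContinuousLinearMap
open scoped InnerProductSpace InnerProduct

theorem LinearMap.forall_apply_mem_iff_forall_norm_eq_one {𝕜 E F : Type*} [RCLike 𝕜]
    [NormedAddCommGroup E] [NormedSpace 𝕜 E] [AddCommGroup F] [Module 𝕜 F]
    (f : E →ₗ[𝕜] F) (S : Submodule 𝕜 F) :
    (∀ x, ‖x‖ = 1 → f x ∈ S) ↔ ∀ x, f x ∈ S := by
  refine ⟨fun h x => ?_, fun h x _ => h x⟩
  rcases eq_or_ne x 0 with rfl | hx
  · simp
  have hx' : x = (‖x‖ : 𝕜) • ((‖x‖⁻¹ : 𝕜) • x) := by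
    rw [smul_smul, mul_inv_cancel₀ (by simpa using hx), one_smul]
  rw [hx', map_smul]
  exact S.smul_mem _ (h _ (norm_smul_inv_norm hx))

section Fluctuation

variable {𝕜 E : Type*} [RCLike 𝕜] [NormedAddCommGroup E] [InnerProductSpace 𝕜 E]

theorem sq_re_inner_le_sq_norm_of_norm_le_one {x : E} (hx : ‖x‖ ≤ 1) (y : E) :
    (re ⟪x, y⟫_𝕜) ^ 2 ≤ ‖y‖ ^ 2 := by
  rw [sq_le_sq, abs_norm]
  calc |re ⟪x, y⟫_𝕜| ≤ ‖⟪x, y⟫_𝕜‖ := abs_re_le_norm _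
    _ ≤ ‖x‖ * ‖y‖ := norm_inner_le_norm x y
    _ ≤ ‖y‖ := mul_le_of_le_one_left (norm_nonneg _) hx

noncomputable def fluctuation (A : E →L[𝕜] E) (x : E) : ℝ :=
  √(re ⟪x, A (A x)⟫_𝕜 - (re ⟪x, A x⟫_𝕜) ^ 2)

theorem fluctuation_eq_of_isSymmetric {A : E →L[𝕜] E} (hA : (A : E →ₗ[𝕜] E).IsSymmetric)
    (x : E) :
    fluctuation A x = √(‖A x‖ ^ 2 - (re ⟪x, A x⟫_𝕜) ^ 2) := by
  have h : ⟪x, A (A x)⟫_𝕜 = ⟪A x, A x⟫_𝕜 := (hA x (A x)).symm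
  rw [fluctuation, h, inner_self_eq_norm_sq]

end Fluctuation

namespace LinearIsometry

variable {𝕜 E F : Type*} [RCLike 𝕜]
  [NormedAddCommGroup E] [InnerProductSpace 𝕜 E] [CompleteSpace E]
  [NormedAddCommGroup F] [InnerProductSpace 𝕜 F] [CompleteSpace F] (ι : E →ₗᵢ[𝕜] F)

@[simp]
theorem adjoint_apply_apply (x : E) : (ι.toContinuousLinearMap†) (ι x) = x :=
  congr($(ι.adjoint_comp_self) x)

theorem norm_sub_apply_adjoint_apply_sq (y : F) :
    ‖y - ι ((ι.toContinuousLinearMap†) y)‖ ^ 2 =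
      ‖y‖ ^ 2 - ‖(ι.toContinuousLinearMap†) y‖ ^ 2 := by
  have hinner :
      re ⟪y, ι ((ι.toContinuousLinearMap†) y)⟫_𝕜 = ‖(ι.toContinuousLinearMap†) y‖ ^ 2 := by
    rw [← inner_self_eq_norm_sq (𝕜 := 𝕜)]
    exact congr_arg re (adjoint_inner_left ι.toContinuousLinearMap _ y).symm
  rw [norm_sub_sq (𝕜 := 𝕜), hinner, ι.norm_map]
  ring

theorem norm_adjoint_apply_le (y : F) : ‖(ι.toContinuousLinearMap†) y‖ ≤ ‖y‖ := by
  refine (pow_le_pow_iff_left₀ (norm_nonneg _) (norm_nonneg _) two_ne_zero).mp ?_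
  linarith [ι.norm_sub_apply_adjoint_apply_sq y,
    sq_nonneg ‖y - ι ((ι.toContinuousLinearMap†) y)‖]

theorem norm_adjoint_apply_eq_iff (y : F) :
    ‖(ι.toContinuousLinearMap†) y‖ = ‖y‖ ↔ y ∈ LinearMap.range ι.toLinearMap := by
  constructor
  · intro h
    have hzero : ‖y - ι ((ι.toContinuousLinearMap†) y)‖ ^ 2 = 0 := by
      rw [norm_sub_apply_adjoint_apply_sq, h, sub_self]
    exact ⟨_, (sub_eq_zero.mp (norm_eq_zero.mp (pow_eq_zero_iff two_ne_zero |>.mp hzero))).symm⟩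
  · rintro ⟨x, rfl⟩
    simp

theorem inner_adjoint_comp_comp_apply (O : F →L[𝕜] F) (x y : E) :
    ⟪x, (ι.toContinuousLinearMap† ∘L O ∘L ι.toContinuousLinearMap) y⟫_𝕜 =
      ⟪ι x, O (ι y)⟫_𝕜 := by
  rw [comp_apply, comp_apply, adjoint_inner_right]
  rfl

theorem eq_adjoint_comp_comp_of_inner {O : F →L[𝕜] F} {Ored : E →L[𝕜] E}
    (h : ∀ x y, ⟪ι x, O (ι y)⟫_𝕜 = ⟪x, Ored y⟫_𝕜) :
    Ored = ι.toContinuousLinearMap† ∘L O ∘L ι.toContinuousLinearMap := by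
  ext y
  refine ext_inner_left 𝕜 fun x => ?_
  rw [inner_adjoint_comp_comp_apply, h]

theorem fluctuation_adjoint_comp_comp_le {O : F →L[𝕜] F} (hO : IsSelfAdjoint O) (x : E) :
    fluctuation (ι.toContinuousLinearMap† ∘L O ∘L ι.toContinuousLinearMap) x ≤
      fluctuation O (ι x) := by
  rw [fluctuation_eq_of_isSymmetric (hO.adjoint_conj _).isSymmetric,
    fluctuation_eq_of_isSymmetric hO.isSymmetric, inner_adjoint_comp_comp_apply]
  gcongr
  exact ι.norm_adjoint_apply_le _

theorem fluctuation_adjoint_comp_comp_eq_iff {O : F →L[𝕜] F} (hO : IsSelfAdjoint O) {x : E}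
    (hx : ‖x‖ ≤ 1) :
    fluctuation (ι.toContinuousLinearMap† ∘L O ∘L ι.toContinuousLinearMap) x =
        fluctuation O (ι x) ↔ O (ι x) ∈ LinearMap.range ι.toLinearMap := by
  have hιx : ‖ι x‖ ≤ 1 := by rwa [ι.norm_map]
  rw [fluctuation_eq_of_isSymmetric (hO.adjoint_conj _).isSymmetric,
    fluctuation_eq_of_isSymmetric hO.isSymmetric,
    Real.sqrt_inj (sub_nonneg.mpr (sq_re_inner_le_sq_norm_of_norm_le_one hx _))
      (sub_nonneg.mpr (sq_re_inner_le_sq_norm_of_norm_le_one hιx _)),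
    inner_adjoint_comp_comp_apply, sub_left_inj, sq_eq_sq₀ (norm_nonneg _) (norm_nonneg _)]
  exact ι.norm_adjoint_apply_eq_iff _

end LinearIsometry

/-- **Fluctuations do not increase under compression.**  With `ι : H_red → H` an
isometric embedding, `O` a bounded self-adjoint operator on `H`, and
`O_red` the compression of `O` to `H_red` (characterized by
`⟨ι Ψ₁, O ι Ψ₂⟩ = ⟨Ψ₁, O_red Ψ₂⟩`): for every unit vector `Ψ ∈ H_red`,
`Δ_{ιΨ}(O) ≥ Δ_Ψ(O_red)`, with equality for all unit `Ψ` if and only if `O`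
preserves `ι[H_red]`.  Here `Δ_Φ(A) = sqrt(⟨Φ, A²Φ⟩ − ⟨Φ, AΦ⟩²)`. -/
theorem statement15 {Hred H : Type*}
    [NormedAddCommGroup Hred] [InnerProductSpace ℂ Hred] [CompleteSpace Hred]
    [NormedAddCommGroup H] [InnerProductSpace ℂ H] [CompleteSpace H]
    (ι : Hred →ₗᵢ[ℂ] H)
    (O : H →L[ℂ] H) (hOsa : IsSelfAdjoint O)
    (Ored : Hred →L[ℂ] Hred)
    (hOred : ∀ Ψ1 Ψ2 : Hred, ⟪ι Ψ1, O (ι Ψ2)⟫ = ⟪Ψ1, Ored Ψ2⟫) :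
    (∀ Ψ : Hred, ‖Ψ‖ = 1 →
      Real.sqrt ((⟪ι Ψ, O (O (ι Ψ))⟫).re - ((⟪ι Ψ, O (ι Ψ)⟫).re) ^ 2)
        ≥ Real.sqrt ((⟪Ψ, Ored (Ored Ψ)⟫).re - ((⟪Ψ, Ored Ψ⟫).re) ^ 2))
    ∧ ((∀ Ψ : Hred, ‖Ψ‖ = 1 →
        Real.sqrt ((⟪ι Ψ, O (O (ι Ψ))⟫).re - ((⟪ι Ψ, O (ι Ψ)⟫).re) ^ 2)
          = Real.sqrt ((⟪Ψ, Ored (Ored Ψ)⟫).re - ((⟪Ψ, Ored Ψ⟫).re) ^ 2))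
      ↔ ∀ u ∈ LinearMap.range ι.toLinearMap, O u ∈ LinearMap.range ι.toLinearMap) := by
  obtain rfl := ι.eq_adjoint_comp_comp_of_inner hOred
  refine ⟨fun Ψ _ => ι.fluctuation_adjoint_comp_comp_le hOsa Ψ, ?_⟩
  calc (∀ Ψ : Hred, ‖Ψ‖ = 1 → fluctuation O (ι Ψ) =
          fluctuation (ι.toContinuousLinearMap† ∘L O ∘L ι.toContinuousLinearMap) Ψ)
      ↔ ∀ Ψ : Hred, ‖Ψ‖ = 1 → O (ι Ψ) ∈ LinearMap.range ι.toLinearMap :=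
        forall₂_congr fun Ψ hΨ =>
          eq_comm.trans (ι.fluctuation_adjoint_comp_comp_eq_iff hOsa hΨ.le)
    _ ↔ ∀ Ψ : Hred, O (ι Ψ) ∈ LinearMap.range ι.toLinearMap :=
        (O.toLinearMap ∘ₗ ι.toLinearMap).forall_apply_mem_iff_forall_norm_eq_one _
    _ ↔ ∀ u ∈ LinearMap.range ι.toLinearMap, O u ∈ LinearMap.range ι.toLinearMap :=
        ⟨fun h _ ⟨Ψ, hΨ⟩ => hΨ ▸ h Ψ, fun h Ψ => h _ ⟨Ψ, rfl⟩⟩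
end

section
/- Let e^{a†(ξ)} and e^{−a(ξ)} be defined by their power series on coherent-type vectors. Then on the Fock vacuum Ψ_0, the Weyl-type factorization exp(a†(ξ) − a(ξ)) Ψ_0 = e^{−½⟨ξ,ξ⟩} exp(a†(ξ)) Ψ_0 holds, where exp(a†(ξ))Ψ_0 = Σ_{n=0}^∞ (a†(ξ))^n Ψ_0/n! converges in F_s(h). -/
open scoped ComplexInnerProductSpace BigOperators

set_option linter.unusedSectionVars false

set_option maxHeartbeats 1000000

noncomputable section

variable {h H : Type*} [NormedAddCommGroup h] [InnerProductSpace ℂ h] [CompleteSpace h]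
  [NormedAddCommGroup H] [InnerProductSpace ℂ H] [CompleteSpace H]

/-- The finite-particle domain of the symmetric Fock space: the span of the
symmetrized elementary tensors `S n v` (the `n`-particle vectors). -/
def FockDomain (S : ∀ n : ℕ, (Fin n → h) → H) : Submodule ℂ H :=
  Submodule.span ℂ (⋃ n : ℕ, Set.range (S n))

theorem S_mem_FockDomain (S : ∀ n : ℕ, (Fin n → h) → H) (n : ℕ) (v : Fin n → h) :
    S n v ∈ FockDomain S :=
  Submodule.subset_span (Set.mem_iUnion.2 ⟨n, ⟨v, rfl⟩⟩)

/-- The Fock vacuum `Ψ₀ = (1, 0, 0, …)`, i.e. the empty symmetrized tensor. -/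
def fockVacuum (S : ∀ n : ℕ, (Fin n → h) → H) : FockDomain S :=
  ⟨S 0 (fun i => i.elim0), S_mem_FockDomain S 0 _⟩

def wcoef (c : ℂ) : ℕ → ℕ → ℂ
  | 0, 0 => 1
  | 0, _+1 => 0
  | (k+1), 0 => - (1 * c * wcoef c k 1)
  | (k+1), (m+1) => wcoef c k m - ((m:ℂ)+2) * c * wcoef c k (m+2)

lemma wcoef_succ (c : ℂ) (k m : ℕ) :
    wcoef c (k+1) m
      = (if m = 0 then 0 else wcoef c k (m-1)) - ((m:ℂ)+1) * c * wcoef c k (m+1) := by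
  cases m with
  | zero => show - (1 * c * wcoef c k 1) = _; simp
  | succ m =>
    show wcoef c k m - ((m:ℂ)+2) * c * wcoef c k (m+2) = _
    simp only [Nat.succ_ne_zero, if_neg, Nat.add_sub_cancel]
    push_cast; ring_nf

lemma wcoef_gt (c : ℂ) : ∀ k m, k < m → wcoef c k m = 0 := by
  intro k
  induction k with
  | zero =>
    intro m hm
    obtain ⟨m', rfl⟩ : ∃ m', m = m' + 1 := ⟨m - 1, by omega⟩
    rfl
  | succ k ih =>
    intro m hm
    rw [wcoef_succ]
    rcases Nat.eq_zero_or_pos m with h0 | h0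
    · omega
    · rw [if_neg (by omega), ih (m-1) (by omega), ih (m+1) (by omega)]
      ring

lemma wcoef_odd (c : ℂ) : ∀ k m j, k = m + 2*j + 1 → wcoef c k m = 0 := by
  intro k
  induction k with
  | zero => intro m j hk; omega
  | succ k ih =>
    intro m j hk
    rw [wcoef_succ]
    have h1 : wcoef c k (m+1) = 0 := by
      rcases j with _ | j'
      · exact wcoef_gt c k (m+1) (by omega)
      · exact ih (m+1) j' (by omega)
    rw [h1]
    cases m with
    | zero => rw [if_pos rfl]; ring
    | succ m' =>
      rw [if_neg (by omega), show m' + 1 - 1 = m' from rfl, ih m' j (by omega)]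
      ring

lemma wcoef_mul (c : ℂ) : ∀ k m j, k = m + 2*j →
    ((2:ℂ)^j * (Nat.factorial j) * (Nat.factorial m)) * wcoef c k m
      = (-c)^j * (Nat.factorial k) := by
  intro k
  induction k with
  | zero =>
    intro m j hk
    have hm : m = 0 := by omega
    have hj : j = 0 := by omega
    subst hm hj
    show _ * (1:ℂ) = _
    simp [Nat.factorial]
  | succ k ih =>
    intro m j hk
    rw [wcoef_succ]
    cases m with
    | zero =>
      rcases j with _ | j'
      · omega
      · have ih1 := ih 1 j' (by omega)
        have hkc : ((k:ℂ)+1) = 2*((j':ℂ)+1) := by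
          exact_mod_cast congrArg (Nat.cast : ℕ → ℂ) (show k+1 = 2*(j'+1) by omega)
        rw [if_pos rfl]
        rw [Nat.factorial_succ k, Nat.factorial_succ j'] at *
        rw [Nat.factorial_one] at ih1
        rw [Nat.factorial_zero]
        push_cast at *
        rw [pow_succ, pow_succ, hkc]
        linear_combination (-(2:ℂ)*c*((j':ℂ)+1)) * ih1
    | succ m' =>
      rw [if_neg (by omega), show m' + 1 - 1 = m' from rfl]
      have ih1 := ih m' j (by omega)
      rcases j with _ | j'
      · have hkm : k = m' := by omega
        subst hkm
        have h2 : wcoef c k (k+1+1) = 0 := wcoef_gt c k (k+2) (by omega)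
        rw [h2]
        rw [Nat.factorial_succ k] at *
        push_cast at *
        linear_combination ((k:ℂ)+1) * ih1
      · have ih2 := ih (m'+2) j' (by omega)
        have hkc : ((k:ℂ)+1) = ((m':ℂ)+1) + 2*((j':ℂ)+1) := by
          exact_mod_cast congrArg (Nat.cast : ℕ → ℂ) (show k+1 = (m'+1)+2*(j'+1) by omega)
        rw [show m'+1+1 = m'+2 from rfl] at *
        rw [Nat.factorial_succ k, Nat.factorial_succ j', Nat.factorial_succ (m'+1),
          Nat.factorial_succ m'] at *
        push_cast at *
        rw [pow_succ, pow_succ, hkc]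
        linear_combination ((m':ℂ)+1) * ih1 - (2*((j':ℂ)+1)*c) * ih2

lemma wcoef_div (c : ℂ) (m j : ℕ) :
    ((Nat.factorial (m + 2*j) : ℂ))⁻¹ * wcoef c (m + 2*j) m
      = ((-c/2)^j * (Nat.factorial j : ℂ)⁻¹) * ((Nat.factorial m : ℂ))⁻¹ := by
  have h := wcoef_mul c (m + 2*j) m j rfl
  have hfk : ((Nat.factorial (m+2*j) : ℕ) : ℂ) ≠ 0 := Nat.cast_ne_zero.2 (Nat.factorial_ne_zero _)
  have hfj : ((Nat.factorial j : ℕ) : ℂ) ≠ 0 := Nat.cast_ne_zero.2 (Nat.factorial_ne_zero _)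
  have hfm : ((Nat.factorial m : ℕ) : ℂ) ≠ 0 := Nat.cast_ne_zero.2 (Nat.factorial_ne_zero _)
  have h2 : ((2:ℂ))^j ≠ 0 := pow_ne_zero _ two_ne_zero
  field_simp at h ⊢
  have hp : ((1:ℂ)/2)^j * 2^j = 1 := by rw [← mul_pow]; norm_num
  have hneg : ((-1:ℂ)/2)^j = (-1)^j * ((1:ℂ)/2)^j := by rw [← mul_pow]; norm_num
  linear_combination ((1:ℂ)/2)^j * h - ((Nat.factorial j : ℂ) * (Nat.factorial m : ℂ) * wcoef c (m + 2*j) m) * hp - (c^j * (Nat.factorial (m + 2*j) : ℂ)) * hneg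

/-- **Weyl factorization on the vacuum:**
`exp(a†(ξ) − a(ξ)) Ψ₀ = e^{−½⟨ξ,ξ⟩} exp(a†(ξ)) Ψ₀`, where
`exp(a†(ξ)) Ψ₀ = Σₙ (a†(ξ))ⁿ Ψ₀ / n!` converges in the Fock space. -/
theorem statement18
    (S : ∀ n : ℕ, (Fin n → h) → H)
    (hS_orth : ∀ (m n : ℕ) (v : Fin m → h) (w : Fin n → h), m ≠ n → ⟪S m v, S n w⟫ = 0)
    (hS_inner : ∀ (n : ℕ) (v w : Fin n → h),
      ⟪S n v, S n w⟫
        = (n.factorial : ℂ)⁻¹ * ∑ σ : Equiv.Perm (Fin n), ∏ i, ⟪v i, w (σ i)⟫)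
    (hS_symm : ∀ (n : ℕ) (σ : Equiv.Perm (Fin n)) (v : Fin n → h), S n (v ∘ σ) = S n v)
    (hS_dense : Dense ((FockDomain S : Submodule ℂ H) : Set H))
    (Ad A : h → (FockDomain S →ₗ[ℂ] FockDomain S))
    (hAd : ∀ (ξ : h) (n : ℕ) (v : Fin n → h),
      ((Ad ξ ⟨S n v, S_mem_FockDomain S n v⟩ : FockDomain S) : H)
        = ((Real.sqrt (n + 1) : ℝ) : ℂ) • S (n + 1) (Fin.cons ξ v))
    (hA0 : ∀ (ξ : h) (v : Fin 0 → h),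
      ((A ξ ⟨S 0 v, S_mem_FockDomain S 0 v⟩ : FockDomain S) : H) = 0)
    (hA : ∀ (ξ : h) (n : ℕ) (v : Fin (n + 1) → h),
      ((A ξ ⟨S (n + 1) v, S_mem_FockDomain S (n + 1) v⟩ : FockDomain S) : H)
        = (((Real.sqrt (n + 1) : ℝ) : ℂ))⁻¹
            • ∑ i : Fin (n + 1), ⟪ξ, v i⟫ • S n (v ∘ i.succAbove))
    (ξ : h) :
    Summable (fun n : ℕ =>
      ((n.factorial : ℂ)⁻¹) • ((((Ad ξ) ^ n) (fockVacuum S) : FockDomain S) : H))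
    ∧ (∑' k : ℕ, ((k.factorial : ℂ)⁻¹)
          • ((((Ad ξ - A ξ) ^ k) (fockVacuum S) : FockDomain S) : H))
        = Complex.exp (-(⟪ξ, ξ⟫ : ℂ) / 2)
          • ∑' n : ℕ, ((n.factorial : ℂ)⁻¹)
              • ((((Ad ξ) ^ n) (fockVacuum S) : FockDomain S) : H) := by
  classical
  set c : ℂ := ⟪ξ, ξ⟫ with hc
  -- the coherent-type vectors
  set E : ℕ → H := fun m => S m (fun _ => ξ) with hE
  set V : ℕ → FockDomain S := fun m => ⟨E m, S_mem_FockDomain S m _⟩ with hV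
  have hvac : fockVacuum S = V 0 := by
    apply Subtype.ext
    show S 0 (fun i => i.elim0) = S 0 (fun _ => ξ)
    congr 1
    funext i
    exact i.elim0
  -- action of the creation operator on the coherent vectors
  have hAdV : ∀ m, Ad ξ (V m) = (((Real.sqrt (m+1) : ℝ) : ℂ)) • V (m+1) := by
    intro m
    apply Subtype.coe_injective
    simp only [Submodule.coe_smul]
    have h1 := hAd ξ m (fun _ => ξ)
    have h2 : (Fin.cons ξ (fun _ => ξ) : Fin (m+1) → h) = fun _ => ξ := by
      funext i
      refine Fin.cases ?_ ?_ i
      · simp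
      · intro j; simp
    rw [h2] at h1
    exact h1
  -- action of the annihilation operator
  have hAV0 : A ξ (V 0) = 0 := by
    apply Subtype.coe_injective
    simp only [Submodule.coe_zero]
    exact hA0 ξ _
  have hAV : ∀ m : ℕ, A ξ (V (m+1)) = ((((Real.sqrt (m+1) : ℝ) : ℂ)) * c) • V m := by
    intro m
    apply Subtype.coe_injective
    simp only [Submodule.coe_smul]
    have h1 := hA ξ m (fun _ => ξ)
    have hsq : Real.sqrt (m+1) > 0 := Real.sqrt_pos.2 (by positivity)
    have hmul : Real.sqrt (m+1) * Real.sqrt (m+1) = (m+1 : ℝ) :=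
      Real.mul_self_sqrt (by positivity)
    have h2 : ∀ i : Fin (m+1), ((fun _ => ξ) ∘ i.succAbove : Fin m → h) = fun _ => ξ := by
      intro i; rfl
    simp only [h2] at h1
    rw [h1]
    rw [Finset.sum_const, Finset.card_univ, Fintype.card_fin,
      ← Nat.cast_smul_eq_nsmul ℂ (m+1), smul_smul, smul_smul]
    have key : ((Real.sqrt ((m:ℝ)+1) : ℝ) : ℂ) * ((Real.sqrt ((m:ℝ)+1) : ℝ) : ℂ)
        = ((m:ℂ)+1) := by
      rw [← Complex.ofReal_mul, hmul]; push_cast; ring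
    have hne : ((Real.sqrt ((m:ℝ)+1) : ℝ) : ℂ) ≠ 0 := by
      exact_mod_cast ne_of_gt hsq
    congr 1
    show (((Real.sqrt ((m:ℝ)+1) : ℝ) : ℂ))⁻¹ * (((m+1:ℕ) : ℂ)) * c = _
    push_cast
    rw [inv_mul_eq_div, div_mul_eq_mul_div, div_eq_iff hne]
    linear_combination (-c) * key
  -- the vectors (a†)^m Ψ₀
  set U : ℕ → FockDomain S := fun m => ((Ad ξ) ^ m) (fockVacuum S) with hU
  have hUsucc : ∀ m, U (m+1) = Ad ξ (U m) := by
    intro m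
    show ((Ad ξ) ^ (m+1)) (fockVacuum S) = _
    rw [pow_succ']
    rfl
  have hUV : ∀ m, U m = (((Real.sqrt (Nat.factorial m) : ℝ) : ℂ)) • V m := by
    intro m
    induction m with
    | zero =>
      show fockVacuum S = _
      rw [hvac]
      norm_num
    | succ m ih =>
      rw [hUsucc, ih, map_smul, hAdV, smul_smul]
      congr 1
      rw [← Complex.ofReal_mul]
      congr 1
      rw [← Real.sqrt_mul (by positivity)]
      congr 1
      rw [Nat.factorial_succ]
      push_cast
      ring
  have hAU0 : A ξ (U 0) = 0 := by
    have : U 0 = V 0 := by rw [hUV]; norm_num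
    rw [this, hAV0]
  have hAU : ∀ m : ℕ, A ξ (U (m+1)) = (((m+1 : ℕ) : ℂ) * c) • U m := by
    intro m
    rw [hUV (m+1), map_smul, hAV, hUV m, smul_smul, smul_smul]
    congr 1
    have hmul : Real.sqrt (m+1) * Real.sqrt (m+1) = (m+1 : ℝ) :=
      Real.mul_self_sqrt (by positivity)
    have hfact : Real.sqrt (Nat.factorial (m+1))
        = Real.sqrt (m+1) * Real.sqrt (Nat.factorial m) := by
      rw [← Real.sqrt_mul (by positivity)]
      congr 1
      rw [Nat.factorial_succ]; push_cast; ring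
    have key : ((Real.sqrt ((m:ℝ)+1) : ℝ) : ℂ) * ((Real.sqrt ((m:ℝ)+1) : ℝ) : ℂ)
        = ((m:ℂ)+1) := by
      rw [← Complex.ofReal_mul, hmul]; push_cast; ring
    rw [hfact]
    push_cast
    linear_combination (((Real.sqrt (Nat.factorial m) : ℝ) : ℂ) * c) * key
  -- action of B = Ad - A on the U basis
  have hBU : ∀ m : ℕ, (Ad ξ - A ξ) (U m)
      = U (m+1) - (((m : ℕ) : ℂ) * c) • U (m-1) := by
    intro m
    rw [LinearMap.sub_apply]
    cases m with
    | zero => rw [hAU0, hUsucc]; simp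
    | succ m => rw [hAU, hUsucc (m+1)]; simp
  -- expansion of B^k Ψ₀
  have hBk : ∀ k : ℕ, ((Ad ξ - A ξ) ^ k) (fockVacuum S)
      = ∑ m ∈ Finset.range (k+1), wcoef c k m • U m := by
    intro k
    induction k with
    | zero =>
      rw [pow_zero, show (0:ℕ)+1 = 1 from rfl, Finset.sum_range_one]
      show fockVacuum S = wcoef c 0 0 • U 0
      have h00 : wcoef c 0 0 = 1 := rfl
      rw [h00, one_smul]
      rfl
    | succ k ih =>
      rw [pow_succ', Module.End.mul_apply, ih, map_sum]
      have hterm : ∀ m, (Ad ξ - A ξ) (wcoef c k m • U m)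
          = wcoef c k m • U (m+1) - (wcoef c k m * m * c) • U (m-1) := by
        intro m
        rw [map_smul, hBU, smul_sub, smul_smul]
        ring_nf
      rw [Finset.sum_congr rfl (fun m _ => hterm m)]
      rw [Finset.sum_sub_distrib]
      have hsum1 : ∑ m ∈ Finset.range (k+1), wcoef c k m • U (m+1)
          = ∑ m ∈ Finset.range (k+2), (if m = 0 then 0 else wcoef c k (m-1)) • U m := by
        rw [Finset.sum_range_succ' (fun m => (if m = 0 then 0 else wcoef c k (m-1)) • U m) (k+1)]
        simp
      have hsum2 : ∑ m ∈ Finset.range (k+1), (wcoef c k m * m * c) • U (m-1)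
          = ∑ m ∈ Finset.range (k+2), (((m:ℂ)+1) * c * wcoef c k (m+1)) • U m := by
        rw [Finset.sum_range_succ' (fun m => (wcoef c k m * m * c) • U (m-1)) k]
        simp only [Nat.cast_zero, mul_zero, zero_mul, zero_smul, add_zero, Nat.add_sub_cancel]
        rw [Finset.sum_range_succ (fun m => (((m:ℂ)+1) * c * wcoef c k (m+1)) • U m) (k+1)]
        rw [Finset.sum_range_succ (fun m => (((m:ℂ)+1) * c * wcoef c k (m+1)) • U m) k]
        rw [wcoef_gt c k (k+1) (by omega), wcoef_gt c k (k+2) (by omega)]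
        simp only [mul_zero, zero_smul, add_zero]
        apply Finset.sum_congr rfl
        intro m _
        push_cast
        ring_nf
      rw [hsum1, hsum2, ← Finset.sum_sub_distrib]
      apply Finset.sum_congr rfl
      intro m _
      rw [wcoef_succ, ← sub_smul]
  -- H-level vectors and norms
  set u : ℕ → H := fun m => ((U m : FockDomain S) : H) with hu
  have hEnorm : ∀ m, ‖E m‖ = ‖ξ‖ ^ m := by
    intro m
    have h1 : ⟪E m, E m⟫ = c ^ m := by
      rw [hE]
      show ⟪S m (fun _ => ξ), S m (fun _ => ξ)⟫ = c ^ m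
      rw [hS_inner m]
      have : ∀ σ : Equiv.Perm (Fin m), ∏ i : Fin m, (⟪ξ, ξ⟫ : ℂ) = c ^ m := by
        intro σ
        rw [Finset.prod_const, Finset.card_univ, Fintype.card_fin]
      rw [Finset.sum_congr rfl (fun σ _ => this σ), Finset.sum_const, Finset.card_univ,
        Fintype.card_perm, Fintype.card_fin, nsmul_eq_mul]
      rw [inv_mul_cancel_left₀ (Nat.cast_ne_zero.2 (Nat.factorial_ne_zero m))]
    have hx := inner_self_eq_norm_sq_to_K (𝕜 := ℂ) (E m)
    have hy := inner_self_eq_norm_sq_to_K (𝕜 := ℂ) ξ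
    have h2 := hx.symm.trans h1
    rw [hc, hy] at h2
    have h3' : (‖E m‖ : ℝ) ^ 2 = ((‖ξ‖ : ℝ) ^ 2) ^ m := by
      exact_mod_cast h2
    have h3 : (‖E m‖ : ℝ) ^ 2 = (‖ξ‖ ^ m : ℝ) ^ 2 := by
      rw [h3', ← pow_mul, ← pow_mul, Nat.mul_comm]
    have h4 : (0:ℝ) ≤ ‖E m‖ := norm_nonneg _
    have h5 : (0:ℝ) ≤ ‖ξ‖ ^ m := by positivity
    nlinarith [sq_nonneg (‖E m‖ - ‖ξ‖ ^ m), sq_nonneg (‖E m‖ + ‖ξ‖ ^ m)]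
  have hunorm : ∀ m, ‖u m‖ = Real.sqrt (Nat.factorial m) * ‖ξ‖ ^ m := by
    intro m
    rw [hu]
    show ‖((U m : FockDomain S) : H)‖ = _
    rw [hUV m, Submodule.coe_smul]
    show ‖(((Real.sqrt (Nat.factorial m) : ℝ) : ℂ)) • E m‖ = _
    rw [norm_smul, Complex.norm_real, hEnorm m, Real.norm_eq_abs,
      abs_of_nonneg (Real.sqrt_nonneg _)]
  -- summability of the exponential series on the vacuum
  have hfacnorm : ∀ m : ℕ, ‖((Nat.factorial m : ℂ))⁻¹ • u m‖ = ‖ξ‖ ^ m / Real.sqrt (Nat.factorial m) := by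
    intro m
    rw [norm_smul, hunorm m, norm_inv, Complex.norm_natCast]
    have hf : (0:ℝ) < Nat.factorial m := by positivity
    have hsq : Real.sqrt (Nat.factorial m) * Real.sqrt (Nat.factorial m) = (Nat.factorial m : ℝ) :=
      Real.mul_self_sqrt (le_of_lt hf)
    have hsqpos : (0:ℝ) < Real.sqrt (Nat.factorial m) := Real.sqrt_pos.2 hf
    rw [inv_mul_eq_div, div_eq_div_iff (ne_of_gt hf) (ne_of_gt hsqpos)]
    linear_combination (‖ξ‖ ^ m) * hsq
  have hratio : ∀ᶠ n : ℕ in Filter.atTop,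
      ‖ξ‖ ^ (n+1) / Real.sqrt (Nat.factorial (n+1))
        ≤ (1/2) * (‖ξ‖ ^ n / Real.sqrt (Nat.factorial n)) := by
    rw [Filter.eventually_atTop]
    refine ⟨⌈4 * ‖ξ‖^2⌉₊, fun n hn => ?_⟩
    have h1 : (4 : ℝ) * ‖ξ‖^2 ≤ n + 1 := by
      calc (4:ℝ) * ‖ξ‖^2 ≤ ⌈4 * ‖ξ‖^2⌉₊ := Nat.le_ceil _
        _ ≤ n := by exact_mod_cast hn
        _ ≤ n + 1 := by linarith
    have h2 : 2 * ‖ξ‖ ≤ Real.sqrt (n+1) := by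
      rw [show (2:ℝ) * ‖ξ‖ = Real.sqrt ((2*‖ξ‖)^2) from
        (Real.sqrt_sq (by positivity)).symm]
      apply Real.sqrt_le_sqrt
      nlinarith
    have hfact : Real.sqrt (Nat.factorial (n+1))
        = Real.sqrt (n+1) * Real.sqrt (Nat.factorial n) := by
      rw [← Real.sqrt_mul (by positivity)]
      congr 1
      rw [Nat.factorial_succ]; push_cast; ring
    have hsqpos : (0:ℝ) < Real.sqrt ((n:ℝ)+1) := Real.sqrt_pos.2 (by positivity)
    have hfpos : (0:ℝ) < Real.sqrt (Nat.factorial n) := Real.sqrt_pos.2 (by positivity)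
    rw [hfact, pow_succ]
    rw [div_le_iff₀ (by positivity)]
    have hle : ‖ξ‖ ≤ Real.sqrt ((n:ℝ)+1) / 2 := by linarith
    calc ‖ξ‖ ^ n * ‖ξ‖ ≤ ‖ξ‖ ^ n * (Real.sqrt ((n:ℝ)+1) / 2) := by
          apply mul_le_mul_of_nonneg_left hle (by positivity)
      _ = (1/2) * (‖ξ‖ ^ n / Real.sqrt (Nat.factorial n)) * (Real.sqrt ((n:ℝ)+1) * Real.sqrt (Nat.factorial n)) := by
          field_simp
  have hsum_norm : Summable (fun m : ℕ => ‖((Nat.factorial m : ℂ))⁻¹ • u m‖) := by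
    apply summable_of_ratio_norm_eventually_le (r := 1/2) (by norm_num)
    filter_upwards [hratio] with n hn
    rw [Real.norm_eq_abs, Real.norm_eq_abs, hfacnorm, hfacnorm,
      abs_of_nonneg (by positivity), abs_of_nonneg (by positivity)]
    exact hn
  have hsummableU : Summable (fun m : ℕ => ((Nat.factorial m : ℂ))⁻¹ • u m) :=
    hsum_norm.of_norm
  constructor
  · exact hsummableU
  -- the double-series argument
  · set g : ℕ × ℕ → H := fun p => (((Nat.factorial p.1 : ℂ))⁻¹ * wcoef c p.1 p.2) • u p.2 with hg
    set ι : ℕ × ℕ → ℕ × ℕ := fun q => (q.2 + 2*q.1, q.2) with hι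
    have hinj : Function.Injective ι := by
      rintro ⟨j, m⟩ ⟨j', m'⟩ hq
      simp only [hι, Prod.mk.injEq] at hq
      obtain ⟨h1, h2⟩ := hq
      subst h2
      exact Prod.ext (by omega) rfl
    have hsupp : ∀ p : ℕ × ℕ, p ∉ Set.range ι → g p = 0 := by
      rintro ⟨k, m⟩ hp
      have hw : wcoef c k m = 0 := by
        rcases Nat.lt_or_ge k m with hlt | hge
        · exact wcoef_gt c k m hlt
        · rcases Nat.even_or_odd (k - m) with ⟨j, hj⟩ | ⟨j, hj⟩
          · exfalso
            refine hp ⟨(j, m), ?_⟩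
            show (m + 2*j, m) = (k, m)
            have : m + 2*j = k := by omega
            rw [this]
          · exact wcoef_odd c k m j (by omega)
      simp [hg, hw]
    have hgι : ∀ j m : ℕ, g (ι (j, m))
        = ((-c/2)^j * ((Nat.factorial j : ℂ))⁻¹) • (((Nat.factorial m : ℂ))⁻¹ • u m) := by
      intro j m
      simp only [hg, hι]
      rw [smul_smul, wcoef_div c m j]
    have hsumgι_norm : Summable (fun q : ℕ × ℕ => ‖g (ι q)‖) := by
      have hbound : ∀ q : ℕ × ℕ, ‖g (ι q)‖
          = (‖c‖/2) ^ q.1 / (Nat.factorial q.1 : ℝ) * ‖((Nat.factorial q.2 : ℂ))⁻¹ • u q.2‖ := by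
        rintro ⟨j, m⟩
        rw [hgι j m, norm_smul]
        show ‖(-c/2)^j * ((Nat.factorial j : ℂ))⁻¹‖ * _ = _
        congr 1
        rw [norm_mul, norm_pow, norm_inv, RCLike.norm_natCast, norm_div, norm_neg,
          RCLike.norm_ofNat]
        exact (div_eq_mul_inv _ _).symm
      simp only [hbound]
      exact Summable.mul_of_nonneg
        (Real.summable_pow_div_factorial (‖c‖/2))
        hsum_norm
        (fun j => by positivity)
        (fun m => norm_nonneg _)
    have hsumgι : Summable (fun q : ℕ × ℕ => g (ι q)) := hsumgι_norm.of_norm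
    have hsumg : Summable g := (hinj.summable_iff hsupp).1 hsumgι
    have hfiber : ∀ k : ℕ, Summable (fun m : ℕ => g (k, m)) := by
      intro k
      apply summable_of_ne_finset_zero (s := Finset.range (k+1))
      intro m hm
      rw [Finset.mem_range, not_lt] at hm
      simp [hg, wcoef_gt c k m (by omega)]
    -- the LHS equals the sum of g over ℕ × ℕ
    have hlhs : (∑' k : ℕ, ((Nat.factorial k : ℂ))⁻¹
          • ((((Ad ξ - A ξ) ^ k) (fockVacuum S) : FockDomain S) : H))
        = ∑' p : ℕ × ℕ, g p := by
      rw [Summable.tsum_prod' hsumg hfiber]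
      apply tsum_congr
      intro k
      have h1 : (∑' m : ℕ, g (k, m)) = ∑ m ∈ Finset.range (k+1), g (k, m) := by
        apply tsum_eq_sum
        intro m hm
        rw [Finset.mem_range, not_lt] at hm
        simp [hg, wcoef_gt c k m (by omega)]
      rw [h1]
      have h2 : ((((Ad ξ - A ξ) ^ k) (fockVacuum S) : FockDomain S) : H)
          = ∑ m ∈ Finset.range (k+1), wcoef c k m • u m := by
        rw [hBk k]
        push_cast
        rfl
      rw [h2, Finset.smul_sum]
      apply Finset.sum_congr rfl
      intro m _
      rw [smul_smul]
    -- the sum over ℕ × ℕ factorizes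
    have hsumS : Summable (fun j : ℕ => (-c/2)^j * ((Nat.factorial j : ℂ))⁻¹) := by
      apply Summable.of_norm
      have : ∀ j : ℕ, ‖(-c/2)^j * ((Nat.factorial j : ℂ))⁻¹‖
          = (‖c‖/2) ^ j / (Nat.factorial j : ℝ) := by
        intro j
        rw [norm_mul, norm_pow, norm_inv, RCLike.norm_natCast, norm_div, norm_neg,
          RCLike.norm_ofNat]
        exact (div_eq_mul_inv _ _).symm
      simp only [this]
      exact Real.summable_pow_div_factorial _
    have hrhs : (∑' p : ℕ × ℕ, g p)
        = Complex.exp (-c/2) • ∑' m : ℕ, ((Nat.factorial m : ℂ))⁻¹ • u m := by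
      rw [← hinj.tsum_eq (Function.support_subset_iff'.2 hsupp)]
      have hfiber2 : ∀ j : ℕ, Summable (fun m : ℕ => g (ι (j, m))) := by
        intro j
        simp only [hgι]
        exact (hsummableU.const_smul _)
      rw [show (fun q : ℕ × ℕ => g (ι q)) = fun q : ℕ × ℕ => g (ι (q.1, q.2)) from rfl] at hsumgι
      rw [Summable.tsum_prod' hsumgι hfiber2]
      have : ∀ j : ℕ, (∑' m : ℕ, g (ι (j, m)))
          = ((-c/2)^j * ((Nat.factorial j : ℂ))⁻¹) • (∑' m : ℕ, ((Nat.factorial m : ℂ))⁻¹ • u m) := by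
        intro j
        simp only [hgι]
        exact Summable.tsum_const_smul _ hsummableU
      rw [tsum_congr this, Summable.tsum_smul_const hsumS]
      congr 1
      rw [Complex.exp_eq_exp_ℂ, NormedSpace.exp_eq_tsum_div]
      apply tsum_congr
      intro j
      exact (div_eq_mul_inv _ _).symm
    rw [hlhs, hrhs]
  done

end
end
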